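/- arXiv:1208.4570 — 2 statements merged into one kernel-verified Lean document; each statement's English description precedes it below -/
import Mathlib

section
/- Let φ(x) = 2^α|x|^{-α} with α = (2(d-1)Λ + 2)/μ where 0 < μ < 1/2 and Λ ≥ 1. If λ(z) is a number in (0,Λ] and r/2 ≤ |z - y| ≤ 2 with P⁺_{λ(z),Λ}(D²φ(z-y)) ≥ -1, where D²φ(x) has eigenvalues α2^α|x|^{-α-2}(α+1) (multiplicity 1) and -α2^α|x|^{-α-2} (multiplicity d-1), then λ(z) < μ. -/
/-- if P⁺_{λ(z),Λ}(D²φ(z-y)) = a((d-1)Λ - (α+1)λ(z)) ≥ -1 with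
a = α 2^α |z-y|^{-(α+2)}, r/2 ≤ |z-y| ≤ 2, α = (2(d-1)Λ+2)/μ, then λ(z) < μ. -/
theorem stmt3 (d : ℕ) (hd : 1 ≤ d) (μ Λ r : ℝ) (hμ0 : 0 < μ) (hμ : μ < 1 / 2)
    (hΛ : 1 ≤ Λ) (hr : 0 < r)
    (α : ℝ) (hα : α = (2 * ((d : ℝ) - 1) * Λ + 2) / μ)
    (z y : EuclideanSpace ℝ (Fin d)) (lz : ℝ) (hlz : 0 < lz) (hlzΛ : lz ≤ Λ)
    (h1 : r / 2 ≤ ‖z - y‖) (h2 : ‖z - y‖ ≤ 2)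
    (hP : α * 2 ^ α * ‖z - y‖ ^ (-(α + 2)) * (((d : ℝ) - 1) * Λ - (α + 1) * lz) ≥ -1) :
    lz < μ := by
  by_contra h
  push_neg at h
  set n := ‖z - y‖ with hn
  have hn0 : 0 < n := lt_of_lt_of_le (by linarith) h1
  have hd1 : (0:ℝ) ≤ (d:ℝ) - 1 := by
    have : (1:ℝ) ≤ (d:ℝ) := by exact_mod_cast hd
    linarith
  have hαμ : α * μ = 2 * ((d:ℝ) - 1) * Λ + 2 := by
    rw [hα]; field_simp
  have hα2 : 2 / μ ≤ α := by
    rw [div_le_iff₀ hμ0]; nlinarith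
  have hα2' : 4 < α := by
    have : 4 < 2 / μ := by
      rw [lt_div_iff₀ hμ0]; nlinarith
    linarith
  have hα0 : 0 < α := by linarith
  -- key: (d-1)Λ - (α+1) lz ≤ -2
  have key1 : ((d:ℝ) - 1) * Λ - (α + 1) * lz ≤ -2 := by
    have h3 : α * μ ≤ α * lz := by nlinarith
    nlinarith
  -- a ≥ α / 4 > 1
  have hnpow : (2:ℝ) ^ (-(α + 2)) ≤ n ^ (-(α + 2)) := by
    have h4 : n ^ (α + 2) ≤ (2:ℝ) ^ (α + 2) :=
      Real.rpow_le_rpow (le_of_lt hn0) h2 (by linarith)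
    rw [Real.rpow_neg (le_of_lt hn0), Real.rpow_neg (by norm_num)]
    exact inv_anti₀ (Real.rpow_pos_of_pos hn0 _) h4
  have h24 : (2:ℝ) ^ α * (2:ℝ) ^ (-(α + 2)) = 1 / 4 := by
    rw [← Real.rpow_add (by norm_num), show α + -(α+2) = -2 by ring]
    rw [Real.rpow_neg (by norm_num)]
    norm_num
  have ha : 1 ≤ α * 2 ^ α * n ^ (-(α + 2)) := by
    have h2pos : (0:ℝ) < (2:ℝ) ^ α := Real.rpow_pos_of_pos (by norm_num) _
    have : α * ((2:ℝ) ^ α * (2:ℝ) ^ (-(α + 2))) ≤ α * (2 ^ α * n ^ (-(α + 2))) := by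
      apply mul_le_mul_of_nonneg_left ?_ (le_of_lt hα0)
      exact mul_le_mul_of_nonneg_left hnpow (le_of_lt h2pos)
    rw [h24] at this
    nlinarith
  nlinarith [mul_le_mul_of_nonneg_left key1 (le_trans zero_le_one ha)]
end

section
/- (Touching-map inverse is Lipschitz with controlled Jacobian.) Let u be semiconcave on B₁ and a ≥ 1. Suppose for y in a measurable set V ⊆ ℝ^d the map z ↦ u(z) + (a/2)|z-y|² attains its infimum over B₁ at a measurable choice z̄(y) ∈ B₁, and let A := z̄(V). Then u is C^{1,1} on A, z̄ has Lipschitz inverse ȳ(z) = z + (1/a)Du(z) on A, and at every point z of A where u is twice differentiable, Dȳ(z) = I + (1/a)D²u(z) ≥ 0. -/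
/-!
Touching `u` from below at `z` by the paraboloid `x ↦ c - (a/2)‖x - y‖²` gives
`u x ≥ u z + ⟪a • (y - z), x - z⟫ - (a/2)‖x - z‖²`. Semiconcavity turns this into the matching
upper bound `u x ≤ u z + ⟪a • (y - z), x - z⟫ + k‖x - z‖²`: a concave function that stays above
`ψ z - M‖· - z‖²` has a maximum at `z`. So `u` is differentiable at `z` with
`∇u z = a • (y - z)`, i.e. `y = z + a⁻¹ • ∇u z`. Comparing the two-sided bounds at two contact
points, tested near their midpoint, shows that `∇u` is Lipschitz on the contact set. Finally
`z` is a local minimum of `u + (a/2)‖· - y‖²`, whose Hessian `D²u + a I` is then positive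
semidefinite.
-/

open Metric

/-- Second-order (Taylor) expansion of `u` at `x` with gradient `p` and Hessian `H`. -/
def HasSecondOrderExpansionAt {d : ℕ} (u : EuclideanSpace ℝ (Fin d) → ℝ)
    (p : EuclideanSpace ℝ (Fin d) →L[ℝ] ℝ)
    (H : EuclideanSpace ℝ (Fin d) →L[ℝ] EuclideanSpace ℝ (Fin d) →L[ℝ] ℝ)
    (x : EuclideanSpace ℝ (Fin d)) : Prop :=
  (fun y => u y - u x - p (y - x) - (1 / 2) * H (y - x) (y - x))
    =o[nhds x] fun y => ‖y - x‖ ^ 2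

open Filter Topology
open scoped RealInnerProductSpace

section TouchingParaboloid

variable {F : Type*} [NormedAddCommGroup F] [InnerProductSpace ℝ F]

theorem ConcaveOn.isMaxOn_of_sub_mul_sq_le {s : Set F} {ψ : F → ℝ} {z : F} {M : ℝ}
    (hψ : ConcaveOn ℝ s ψ) (hs : s ∈ 𝓝 z)
    (hlow : ∀ w ∈ s, ψ z - M * ‖w - z‖ ^ 2 ≤ ψ w) : IsMaxOn ψ s z := by
  refine isMaxOn_iff.2 fun x hx => ?_
  have hcurve : Tendsto (fun τ : ℝ => z + τ • (z - x)) (𝓝 0) (𝓝 z) := by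
    have : Continuous fun τ : ℝ => z + τ • (z - x) := by fun_prop
    simpa using this.tendsto 0
  -- `z` divides the segment from `x` to `z + τ • (z - x)` in the ratio `1 : τ`
  have hbound : ∀ᶠ τ in 𝓝[>] (0 : ℝ), ψ x ≤ ψ z + M * ‖x - z‖ ^ 2 * τ := by
    filter_upwards [(hcurve.eventually_mem hs).filter_mono nhdsWithin_le_nhds,
      self_mem_nhdsWithin] with τ hτs (hτ : 0 < τ)
    have hcomb := hψ.2 hx hτs (by positivity : 0 ≤ τ / (1 + τ)) (by positivity : 0 ≤ 1 / (1 + τ))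
      (by field_simp; ring)
    have hz : (τ / (1 + τ)) • x + (1 / (1 + τ)) • (z + τ • (z - x)) = z := by
      match_scalars <;> field_simp
      ring
    have hfar : ψ z - M * τ ^ 2 * ‖x - z‖ ^ 2 ≤ ψ (z + τ • (z - x)) := by
      have := hlow _ hτs
      rwa [add_sub_cancel_left, norm_smul, norm_sub_rev, Real.norm_of_nonneg hτ.le, mul_pow,
        ← mul_assoc] at this
    rw [hz, smul_eq_mul, smul_eq_mul] at hcomb
    have hcomb' : τ * ψ x + ψ (z + τ • (z - x)) ≤ (1 + τ) * ψ z := by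
      have := mul_le_mul_of_nonneg_left hcomb (by positivity : (0 : ℝ) ≤ 1 + τ)
      field_simp at this
      linarith
    nlinarith
  have hlim : Tendsto (fun τ : ℝ => ψ z + M * ‖x - z‖ ^ 2 * τ) (𝓝 0) (𝓝 (ψ z)) := by
    have : Continuous fun τ : ℝ => ψ z + M * ‖x - z‖ ^ 2 * τ := by fun_prop
    simpa using this.tendsto 0
  exact ge_of_tendsto (hlim.mono_left nhdsWithin_le_nhds) hbound

theorem lower_bound_of_isMinOn_add_sq {u : F → ℝ} {s : Set F} {a : ℝ} {y z : F}
    (hmin : IsMinOn (fun x => u x + a / 2 * ‖x - y‖ ^ 2) s z) {x : F} (hx : x ∈ s) :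
    u z + ⟪a • (y - z), x - z⟫ - a / 2 * ‖x - z‖ ^ 2 ≤ u x := by
  have h := isMinOn_iff.1 hmin x hx
  have hsplit : ‖x - y‖ ^ 2 = ‖x - z‖ ^ 2 - 2 * ⟪y - z, x - z⟫ + ‖z - y‖ ^ 2 := by
    rw [show x - y = (x - z) - (y - z) by abel, norm_sub_sq_real, norm_sub_rev y z,
      real_inner_comm]
  rw [hsplit] at h
  rw [real_inner_smul_left]
  linarith

theorem upper_bound_of_concaveOn_sub_sq {u : F → ℝ} {s : Set F} {k M : ℝ} {p z : F}
    (hconc : ConcaveOn ℝ s fun x => u x - k * ‖x‖ ^ 2) (hs : s ∈ 𝓝 z)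
    (hlow : ∀ x ∈ s, u z + ⟪p, x - z⟫ - M * ‖x - z‖ ^ 2 ≤ u x) {x : F} (hx : x ∈ s) :
    u x ≤ u z + ⟪p, x - z⟫ + k * ‖x - z‖ ^ 2 := by
  set ψ : F → ℝ := fun w => u w - ⟪p, w⟫ - k * ‖w - z‖ ^ 2
  have hψ : ConcaveOn ℝ s ψ := by
    refine ((hconc.add ((innerₛₗ ℝ ((2 * k) • z - p)).concaveOn hconc.1)).add_const
      (-(k * ‖z‖ ^ 2))).congr fun w _ => ?_
    simp only [ψ, Pi.add_apply, innerₛₗ_apply_apply, norm_sub_sq_real, inner_sub_left,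
      real_inner_smul_left, real_inner_comm z w]
    ring
  have hψlow : ∀ w ∈ s, ψ z - (M + k) * ‖w - z‖ ^ 2 ≤ ψ w := fun w hw => by
    have := hlow w hw
    simp only [ψ, sub_self, norm_zero, inner_sub_right] at this ⊢
    linarith
  have := isMaxOn_iff.1 (hψ.isMaxOn_of_sub_mul_sq_le hs hψlow) x hx
  simp only [ψ, sub_self, norm_zero, inner_sub_right] at this ⊢
  linarith

def HasQuadraticApproxOn (u : F → ℝ) (p : F) (C : ℝ) (s : Set F) (z : F) : Prop :=
  ∀ x ∈ s, |u x - u z - ⟪p, x - z⟫| ≤ C * ‖x - z‖ ^ 2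

theorem hasQuadraticApproxOn_of_isMinOn {u : F → ℝ} {s : Set F} {k a : ℝ} {y z : F}
    (hconc : ConcaveOn ℝ s fun x => u x - k * ‖x‖ ^ 2) (hs : s ∈ 𝓝 z)
    (hmin : IsMinOn (fun x => u x + a / 2 * ‖x - y‖ ^ 2) s z) :
    HasQuadraticApproxOn u (a • (y - z)) (max k (a / 2)) s z := by
  intro x hx
  have hlow := lower_bound_of_isMinOn_add_sq hmin hx
  have hup := upper_bound_of_concaveOn_sub_sq hconc hs
    (fun x hx => lower_bound_of_isMinOn_add_sq hmin hx) hx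
  have hk := mul_le_mul_of_nonneg_right (le_max_left k (a / 2)) (sq_nonneg ‖x - z‖)
  have ha := mul_le_mul_of_nonneg_right (le_max_right k (a / 2)) (sq_nonneg ‖x - z‖)
  rw [abs_le]
  constructor <;> linarith

theorem HasQuadraticApproxOn.hasGradientAt [CompleteSpace F] {u : F → ℝ} {p : F} {C : ℝ}
    {s : Set F} {z : F} (h : HasQuadraticApproxOn u p C s z) (hs : s ∈ 𝓝 z) :
    HasGradientAt u p z := by
  rw [hasGradientAt_iff_hasFDerivAt, hasFDerivAt_iff_isLittleO]
  have hsq : (fun x => u x - u z - ⟪p, x - z⟫) =O[𝓝 z] fun x => ‖x - z‖ ^ 2 :=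
    .of_bound C <| eventually_of_mem hs fun x hx => by
      simpa only [Real.norm_eq_abs, abs_pow, abs_norm] using h x hx
  simpa only [InnerProductSpace.toDual_apply_apply] using
    hsq.trans_isLittleO (Asymptotics.isLittleO_pow_sub_sub z one_lt_two)

theorem HasQuadraticApproxOn.inner_sub_sub_le {u : F → ℝ} {p₁ p₂ z₁ z₂ x x' : F} {C : ℝ}
    {s : Set F} (h₁ : HasQuadraticApproxOn u p₁ C s z₁) (h₂ : HasQuadraticApproxOn u p₂ C s z₂)
    (hx : x ∈ s) (hx' : x' ∈ s) :
    ⟪p₁ - p₂, x - x'⟫ ≤ C * (‖x - z₁‖ ^ 2 + ‖x - z₂‖ ^ 2 + ‖x' - z₁‖ ^ 2 + ‖x' - z₂‖ ^ 2) := by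
  have e₁ := (abs_le.1 (h₁ x hx)).1
  have e₂ := (abs_le.1 (h₂ x hx)).2
  have e₃ := (abs_le.1 (h₂ x' hx')).1
  have e₄ := (abs_le.1 (h₁ x' hx')).2
  have : ⟪p₁ - p₂, x - x'⟫ = ⟪p₁, x - z₁⟫ - ⟪p₁, x' - z₁⟫ - ⟪p₂, x - z₂⟫ + ⟪p₂, x' - z₂⟫ := by
    simp only [inner_sub_left, inner_sub_right]
    ring
  linarith

theorem lipschitzOnWith_of_hasQuadraticApproxOn_ball {u : F → ℝ} {p : F → F} {T : Set F}
    {C : ℝ} (hC : 0 ≤ C) (hT : T ⊆ ball 0 1)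
    (hp : ∀ z ∈ T, HasQuadraticApproxOn u (p z) C (ball 0 1) z) :
    LipschitzOnWith (25 / 2 * C).toNNReal p T := by
  refine LipschitzOnWith.of_dist_le_mul fun z₁ h₁ z₂ h₂ => ?_
  rw [Real.coe_toNNReal _ (by positivity), dist_eq_norm, dist_eq_norm]
  set P := p z₁ - p z₂
  set r := ‖z₁ - z₂‖
  rcases eq_or_ne P 0 with hP | hP
  · rw [hP, norm_zero]
    positivity
  have hz₁ := mem_ball_zero_iff.1 (hT h₁)
  have hz₂ := mem_ball_zero_iff.1 (hT h₂)
  have hr : 0 < r := norm_pos_iff.2 <| sub_ne_zero.2 fun h => hP (by simp [P, h])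
  have hr2 : r < 2 := (norm_sub_le z₁ z₂).trans_lt (by linarith)
  -- test points `(1 - t) • m ± t • w` around the midpoint `m`, with `t = r / 2` and `w ∥ P`
  set t := r / 2 with ht
  have ht₀ : 0 < t := half_pos hr
  have ht₁ : t < 1 := by linarith
  set m : F := (1 / 2 : ℝ) • z₁ + (1 / 2 : ℝ) • z₂
  set w : F := (1 / 2 : ℝ) • (‖P‖⁻¹ • P)
  have hm : m ∈ ball (0 : F) 1 := convex_ball 0 1 (hT h₁) (hT h₂) (by norm_num) (by norm_num)
    (by norm_num)
  have hw : ‖w‖ = 1 / 2 := by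
    rw [norm_smul, norm_smul, norm_inv, norm_norm, inv_mul_cancel₀ (norm_ne_zero_iff.2 hP),
      Real.norm_of_nonneg (by norm_num), mul_one]
  have hmem : ∀ w' : F, ‖w'‖ = 1 / 2 → (1 - t) • m + t • w' ∈ ball (0 : F) 1 := fun w' hw' =>
    convex_ball 0 1 hm (mem_ball_zero_iff.2 (by rw [hw']; norm_num)) (by linarith)
      (by positivity) (by ring)
  have hdist : ∀ w' : F, ‖w'‖ = 1 / 2 → ∀ q : F, ‖m - q‖ = r / 2 →
      ‖(1 - t) • m + t • w' - q‖ ^ 2 ≤ (5 / 4 * r) ^ 2 := fun w' hw' q hq => by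
    refine pow_le_pow_left₀ (norm_nonneg _) ?_ 2
    calc ‖(1 - t) • m + t • w' - q‖ = ‖(m - q) + t • (w' - m)‖ := by congr 1; module
      _ ≤ ‖m - q‖ + t * (‖w'‖ + ‖m‖) := by
        refine (norm_add_le _ _).trans ?_
        rw [norm_smul, Real.norm_of_nonneg ht₀.le]
        gcongr
        exact norm_sub_le _ _
      _ ≤ 5 / 4 * r := by
        rw [hq, hw']
        nlinarith [mem_ball_zero_iff.1 hm]
  have hm₁ : ‖m - z₁‖ = r / 2 := by
    rw [show m - z₁ = (1 / 2 : ℝ) • (z₂ - z₁) by module, norm_smul, norm_sub_rev,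
      Real.norm_of_nonneg (by norm_num)]
    ring
  have hm₂ : ‖m - z₂‖ = r / 2 := by
    rw [show m - z₂ = (1 / 2 : ℝ) • (z₁ - z₂) by module, norm_smul,
      Real.norm_of_nonneg (by norm_num)]
    ring
  have hw' : ‖-w‖ = 1 / 2 := by rw [norm_neg, hw]
  have key := (hp z₁ h₁).inner_sub_sub_le (hp z₂ h₂) (hmem w hw) (hmem (-w) hw')
  have hinner : ⟪P, (1 - t) • m + t • w - ((1 - t) • m + t • -w)⟫ = t * ‖P‖ := by
    rw [show (1 - t) • m + t • w - ((1 - t) • m + t • -w) = (t * ‖P‖⁻¹) • P by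
      simp only [w]; module]
    rw [real_inner_smul_right, real_inner_self_eq_norm_sq]
    field_simp
  rw [hinner] at key
  have hsum := add_le_add (add_le_add (add_le_add (hdist w hw z₁ hm₁) (hdist w hw z₂ hm₂))
    (hdist (-w) hw' z₁ hm₁)) (hdist (-w) hw' z₂ hm₂)
  have := key.trans (mul_le_mul_of_nonneg_left hsum hC)
  refine le_of_mul_le_mul_left ?_ ht₀
  rw [ht] at this ⊢
  linarith

theorem IsLocalMin.nonneg_of_isLittleO_sq {f : F → ℝ} {z : F} {L : F →L[ℝ] ℝ} {Q : F → ℝ}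
    (hmin : IsLocalMin f z) (hQ : ∀ (t : ℝ) (v : F), Q (t • v) = t ^ 2 * Q v)
    (hf : (fun x => f x - f z - L (x - z) - Q (x - z)) =o[𝓝 z] fun x => ‖x - z‖ ^ 2)
    (v : F) : 0 ≤ Q v := by
  refine le_of_forall_pos_le_add fun ε hε => ?_
  obtain ⟨c, hc, hcv⟩ : ∃ c > 0, c * ‖v‖ ^ 2 ≤ ε := ⟨ε / (‖v‖ ^ 2 + 1), by positivity, by
    rw [div_mul_eq_mul_div, div_le_iff₀ (by positivity)]
    nlinarith⟩
  have hcurve : ∀ σ : ℝ, Tendsto (fun t : ℝ => z + (σ * t) • v) (𝓝 0) (𝓝 z) := fun σ => by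
    have : Continuous fun t : ℝ => z + (σ * t) • v := by fun_prop
    simpa using this.tendsto 0
  have hnear : ∀ σ : ℝ, ∀ᶠ t in 𝓝 (0 : ℝ), f z ≤ f (z + (σ * t) • v) ∧
      f (z + (σ * t) • v) - f z - σ * t * L v - (σ * t) ^ 2 * Q v ≤ c * (σ * t) ^ 2 * ‖v‖ ^ 2 :=
    fun σ => (hcurve σ).eventually (hmin.and (hf.def hc)) |>.mono fun t ht => by
      refine ⟨ht.1, ?_⟩
      have := (le_abs_self _).trans ht.2
      simpa [norm_smul, mul_pow, hQ, mul_assoc] using this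
  obtain ⟨t, ⟨⟨hfp, hRp⟩, ⟨hfn, hRn⟩⟩, ht⟩ :=
    (((hnear 1).and (hnear (-1))).filter_mono nhdsWithin_le_nhds |>.and
      (self_mem_nhdsWithin : {(0 : ℝ)}ᶜ ∈ 𝓝[≠] 0)).exists
  have ht2 : 0 < t ^ 2 := sq_pos_of_ne_zero ht
  have : 0 ≤ t ^ 2 * (Q v + c * ‖v‖ ^ 2) := by nlinarith
  linarith [(mul_nonneg_iff_of_pos_left ht2).1 this]

theorem add_inv_mul_nonneg_of_isMinOn {u : F → ℝ} {s : Set F} {a : ℝ} (ha : 0 < a) {y z : F}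
    (hmin : IsMinOn (fun x => u x + a / 2 * ‖x - y‖ ^ 2) s z) (hs : s ∈ 𝓝 z)
    {p : F →L[ℝ] ℝ} {H : F →L[ℝ] F →L[ℝ] ℝ}
    (hexp : (fun x => u x - u z - p (x - z) - 1 / 2 * H (x - z) (x - z))
      =o[𝓝 z] fun x => ‖x - z‖ ^ 2)
    (v : F) : 0 ≤ ‖v‖ ^ 2 + a⁻¹ * H v v := by
  -- the touching function has the same remainder, with the Hessian shifted by `a • I`
  have hQ := (hmin.isLocalMin hs).nonneg_of_isLittleO_sq (L := p + a • innerSL ℝ (z - y))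
    (Q := fun w => 1 / 2 * H w w + a / 2 * ‖w‖ ^ 2) (fun t w => ?_)
    (hexp.congr_left fun x => ?_) v
  · rw [show ‖v‖ ^ 2 + a⁻¹ * H v v = 2 / a * (1 / 2 * H v v + a / 2 * ‖v‖ ^ 2) by
      field_simp; ring]
    positivity
  · simp only [map_smul, smul_apply, smul_eq_mul, norm_smul, Real.norm_eq_abs, mul_pow, sq_abs]
    ring
  · have hsplit : ‖x - y‖ ^ 2 = ‖x - z‖ ^ 2 + 2 * ⟪z - y, x - z⟫ + ‖z - y‖ ^ 2 := by
      rw [show x - y = (x - z) + (z - y) by abel, norm_add_sq_real, real_inner_comm]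
    simp only [add_apply, smul_apply, innerSL_apply_apply, smul_eq_mul, hsplit]
    ring

end TouchingParaboloid

theorem stmt8_general (d : ℕ) (u : EuclideanSpace ℝ (Fin d) → ℝ) (k : ℝ)
    (hconc : ConcaveOn ℝ (ball 0 1) (fun x => u x - k * ‖x‖ ^ 2))
    (a : ℝ) (ha : 1 ≤ a)
    (V : Set (EuclideanSpace ℝ (Fin d)))
    (zbar : EuclideanSpace ℝ (Fin d) → EuclideanSpace ℝ (Fin d))
    (hz : ∀ y ∈ V, zbar y ∈ ball (0 : EuclideanSpace ℝ (Fin d)) 1 ∧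
      ∀ x ∈ ball (0 : EuclideanSpace ℝ (Fin d)) 1,
        u (zbar y) + (a / 2) * ‖zbar y - y‖ ^ 2 ≤ u x + (a / 2) * ‖x - y‖ ^ 2)
    (A : Set (EuclideanSpace ℝ (Fin d))) (hA : A = zbar '' V) :
    ∃ g : EuclideanSpace ℝ (Fin d) → EuclideanSpace ℝ (Fin d),
      (∀ z ∈ A, HasFDerivWithinAt u
        ((InnerProductSpace.toDual ℝ (EuclideanSpace ℝ (Fin d))) (g z)) (ball 0 1) z) ∧
      (∃ C : ℝ, ∀ x ∈ A, ∀ y ∈ ball (0 : EuclideanSpace ℝ (Fin d)) 1,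
        |u y - u x - (inner ℝ (g x) (y - x) : ℝ)| ≤ C * ‖x - y‖ ^ 2) ∧
      (∃ C : NNReal, LipschitzOnWith C (fun z => z + a⁻¹ • g z) A) ∧
      (∀ y ∈ V, zbar y + a⁻¹ • g (zbar y) = y) ∧
      (∀ z ∈ A, ∀ p H, HasSecondOrderExpansionAt u p H z →
        ∀ v : EuclideanSpace ℝ (Fin d), 0 ≤ ‖v‖ ^ 2 + a⁻¹ * H v v) := by
  have hball : ∀ y ∈ V, ball 0 1 ∈ 𝓝 (zbar y) := fun y hy => isOpen_ball.mem_nhds (hz y hy).1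
  have hmin : ∀ y ∈ V, IsMinOn (fun x => u x + a / 2 * ‖x - y‖ ^ 2) (ball 0 1) (zbar y) :=
    fun y hy => isMinOn_iff.2 (hz y hy).2
  have happrox : ∀ y ∈ V,
      HasQuadraticApproxOn u (a • (y - zbar y)) (max k (a / 2)) (ball 0 1) (zbar y) :=
    fun y hy => hasQuadraticApproxOn_of_isMinOn hconc (hball y hy) (hmin y hy)
  have hgrad : ∀ y ∈ V, gradient u (zbar y) = a • (y - zbar y) :=
    fun y hy => ((happrox y hy).hasGradientAt (hball y hy)).gradient
  have hcontact : ∀ z ∈ A,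
      HasQuadraticApproxOn u (gradient u z) (max k (a / 2)) (ball 0 1) z ∧ ball 0 1 ∈ 𝓝 z := by
    rw [hA]
    rintro _ ⟨y, hy, rfl⟩
    exact ⟨hgrad y hy ▸ happrox y hy, hball y hy⟩
  have hlip := lipschitzOnWith_of_hasQuadraticApproxOn_ball (le_max_of_le_right (by linarith))
    (fun z hz => mem_of_mem_nhds (hcontact z hz).2) fun z hz => (hcontact z hz).1
  refine ⟨gradient u, fun z hzA => ?_, ⟨max k (a / 2), fun x hx y hy => ?_⟩,
    ⟨_, LipschitzWith.id.lipschitzOnWith.add ((lipschitzWith_smul a⁻¹).comp_lipschitzOnWith hlip)⟩,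
    fun y hy => ?_, ?_⟩
  · exact ((hcontact z hzA).1.hasGradientAt (hcontact z hzA).2).hasFDerivAt.hasFDerivWithinAt
  · rw [norm_sub_rev]
    exact (hcontact x hx).1 y hy
  · rw [hgrad y hy, smul_smul, inv_mul_cancel₀ (by positivity), one_smul, add_sub_cancel]
  · rw [hA]
    rintro _ ⟨y, hy, rfl⟩ p H hexp v
    exact add_inv_mul_nonneg_of_isMinOn (by linarith) (hmin y hy) (hball y hy) hexp v

/-- the touching map z̄ has Lipschitz inverse ȳ(z) = z + (1/a)Du(z) on the
contact set A, u is C^{1,1} on A, and Dȳ = I + (1/a)D²u ≥ 0 at twice-differentiability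
points of A. -/
theorem stmt8 (d : ℕ) (u : EuclideanSpace ℝ (Fin d) → ℝ) (k : ℝ) (hk : 0 < k)
    (hconc : ConcaveOn ℝ (ball 0 1) (fun x => u x - k * ‖x‖ ^ 2))
    (a : ℝ) (ha : 1 ≤ a)
    (V : Set (EuclideanSpace ℝ (Fin d))) (hV : MeasurableSet V)
    (zbar : EuclideanSpace ℝ (Fin d) → EuclideanSpace ℝ (Fin d)) (hzm : Measurable zbar)
    (hz : ∀ y ∈ V, zbar y ∈ ball (0 : EuclideanSpace ℝ (Fin d)) 1 ∧
      ∀ x ∈ ball (0 : EuclideanSpace ℝ (Fin d)) 1,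
        u (zbar y) + (a / 2) * ‖zbar y - y‖ ^ 2 ≤ u x + (a / 2) * ‖x - y‖ ^ 2)
    (A : Set (EuclideanSpace ℝ (Fin d))) (hA : A = zbar '' V) :
    ∃ g : EuclideanSpace ℝ (Fin d) → EuclideanSpace ℝ (Fin d),
      (∀ z ∈ A, HasFDerivWithinAt u
        ((InnerProductSpace.toDual ℝ (EuclideanSpace ℝ (Fin d))) (g z)) (ball 0 1) z) ∧
      (∃ C : ℝ, ∀ x ∈ A, ∀ y ∈ ball (0 : EuclideanSpace ℝ (Fin d)) 1,
        |u y - u x - (inner ℝ (g x) (y - x) : ℝ)| ≤ C * ‖x - y‖ ^ 2) ∧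
      (∃ C : NNReal, LipschitzOnWith C (fun z => z + a⁻¹ • g z) A) ∧
      (∀ y ∈ V, zbar y + a⁻¹ • g (zbar y) = y) ∧
      (∀ z ∈ A, ∀ p H, HasSecondOrderExpansionAt u p H z →
        ∀ v : EuclideanSpace ℝ (Fin d), 0 ≤ ‖v‖ ^ 2 + a⁻¹ * H v v) :=
  stmt8_general d u k hconc a ha V zbar hz A hA
end
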